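/- Let A = [[2 - t⁻¹, 2t - 1, 0], [0, 2t - 1, 2 - t⁻¹]] and B = [[2 - t⁻¹, 2t - 1, 0], [0, -2 + t, 2 - t]] be 2×3 matrices over ℤ[t, t⁻¹]. Then the ideal of ℤ[t, t⁻¹] generated by the 2×2 minors of A is the principal ideal generated by (2 - t⁻¹)², while the ideal generated by the 2×2 minors of B is the principal ideal generated by (2 - t⁻¹)(2 - t), and these two ideals are distinct. -/

import Mathlib

open LaurentPolynomial

/-- The set of 2×2 minors of a 2×3 matrix. -/
def minors2x3 {R : Type*} [CommRing R] (M : Matrix (Fin 2) (Fin 3) R) : Set R :=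
  { M 0 0 * M 1 1 - M 0 1 * M 1 0,
    M 0 0 * M 1 2 - M 0 2 * M 1 0,
    M 0 1 * M 1 2 - M 0 2 * M 1 1 }

/-- The presentation matrix of π₁(W₂₂). -/
noncomputable def matA : Matrix (Fin 2) (Fin 3) (LaurentPolynomial ℤ) :=
  !![2 - T (-1), 2 * T 1 - 1, 0;
     0, 2 * T 1 - 1, 2 - T (-1)]

/-- The presentation matrix of π₁(W₁₂). -/
noncomputable def matB : Matrix (Fin 2) (Fin 3) (LaurentPolynomial ℤ) :=
  !![2 - T (-1), 2 * T 1 - 1, 0;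
     0, -2 + T 1, 2 - T 1]

/-! Each 2×2 minor of `matA` is a unit multiple of `(2 - t⁻¹)²` and each one of `matB` a unit
multiple of `(2 - t⁻¹)(2 - t)`, because `2t - 1 = t (2 - t⁻¹)` and `t` is a unit. The two ideals
differ since evaluation at `t = 2` kills the second generator but not the first. -/

theorem Ideal.span_eq_span_singleton_of_forall_associated {R : Type*} [CommSemiring R]
    {s : Set R} {g : R} (hs : s.Nonempty) (h : ∀ x ∈ s, Associated x g) :
    Ideal.span s = Ideal.span {g} := by
  refine le_antisymm (Ideal.span_le.2 fun x hx ↦ Ideal.mem_span_singleton.2 (h x hx).symm.dvd) ?_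
  obtain ⟨x, hx⟩ := hs
  exact (Ideal.span_singleton_le_iff_mem _).2 <|
    Ideal.mem_of_dvd _ (h x hx).dvd (Ideal.subset_span hx)

theorem Ideal.span_singleton_ne_of_map_eq_zero {R S : Type*} [CommSemiring R] [CommSemiring S]
    (φ : R →+* S) {x y : R} (hx : φ x ≠ 0) (hy : φ y = 0) :
    Ideal.span {x} ≠ Ideal.span {y} := fun h ↦
  hx <| zero_dvd_iff.1 <| hy ▸ map_dvd φ (Ideal.span_singleton_le_span_singleton.1 h.le)

theorem minors2x3_of_eq_zero {R : Type*} [CommRing R] {M : Matrix (Fin 2) (Fin 3) R}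
    (h02 : M 0 2 = 0) (h10 : M 1 0 = 0) :
    minors2x3 M = {M 0 0 * M 1 1, M 0 0 * M 1 2, M 0 1 * M 1 2} := by
  simp [minors2x3, h02, h10]

theorem LaurentPolynomial.associated_two_mul_T_one_sub_one {R : Type*} [CommRing R] :
    Associated (2 * T 1 - 1 : R[T;T⁻¹]) (2 - T (-1)) := by
  have h : (2 * T 1 - 1 : R[T;T⁻¹]) = T 1 * (2 - T (-1)) := by
    rw [mul_sub, ← T_add]
    norm_num [T_zero]
  rw [h]
  exact associated_unit_mul_left _ _ (isUnit_T 1)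

theorem span_minors2x3_matA :
    Ideal.span (minors2x3 matA) = Ideal.span {(2 - T (-1) : ℤ[T;T⁻¹]) ^ 2} := by
  rw [minors2x3_of_eq_zero rfl rfl, sq]
  refine Ideal.span_eq_span_singleton_of_forall_associated (Set.insert_nonempty _ _) ?_
  simp only [matA, Matrix.of_apply, Matrix.cons_val', Matrix.cons_val_zero, Matrix.cons_val_one,
    Matrix.cons_val_two, Matrix.head_cons, Matrix.tail_cons, Matrix.empty_val',
    Matrix.cons_val_fin_one]
  rintro x (rfl | rfl | rfl)
  · exact associated_two_mul_T_one_sub_one.mul_left _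
  · rfl
  · exact associated_two_mul_T_one_sub_one.mul_right _

theorem span_minors2x3_matB :
    Ideal.span (minors2x3 matB) = Ideal.span {((2 - T (-1)) * (2 - T 1) : ℤ[T;T⁻¹])} := by
  rw [minors2x3_of_eq_zero rfl rfl]
  refine Ideal.span_eq_span_singleton_of_forall_associated (Set.insert_nonempty _ _) ?_
  simp only [matB, Matrix.of_apply, Matrix.cons_val', Matrix.cons_val_zero, Matrix.cons_val_one,
    Matrix.cons_val_two, Matrix.head_cons, Matrix.tail_cons, Matrix.empty_val',
    Matrix.cons_val_fin_one]
  rintro x (rfl | rfl | rfl)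
  · rw [show (-2 + T 1 : ℤ[T;T⁻¹]) = -(2 - T 1) by ring, mul_neg]
    exact Associated.rfl.neg_left
  · rfl
  · exact associated_two_mul_T_one_sub_one.mul_right _

theorem minor_ideals :
    Ideal.span (minors2x3 matA) = Ideal.span {(2 - T (-1) : LaurentPolynomial ℤ) ^ 2} ∧
    Ideal.span (minors2x3 matB) =
      Ideal.span {((2 - T (-1)) * (2 - T 1) : LaurentPolynomial ℤ)} ∧
    Ideal.span (minors2x3 matA) ≠ Ideal.span (minors2x3 matB) := by
  refine ⟨span_minors2x3_matA, span_minors2x3_matB, ?_⟩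
  rw [span_minors2x3_matA, span_minors2x3_matB]
  refine Ideal.span_singleton_ne_of_map_eq_zero
    (eval₂ (Int.castRingHom ℚ) (Units.mk0 2 two_ne_zero)) ?_ ?_ <;> norm_num [map_ofNat]
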